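/- arXiv:2203.00240 — 5 statements merged into one kernel-verified Lean document; each statement's English description precedes it below -/
import Mathlib

section
/- Let κ : (0,∞) → (0,∞) be positive and integrable on bounded intervals, and suppose that for some a with 0 ≤ a ≤ 1 the function P ↦ P^{1−a} κ(P) is nondecreasing. Then for every β ≥ 0 the function φ_{β,a}(P) = P^{−(a+β)} ∫₀^P u^β κ(u) du is nondecreasing on (0,∞). -/
open MeasureTheory intervalIntegral Set

/-!
Write `c = a + β` and `g(u) = u^{1-a} κ(u)`, so that `u^β κ(u) = u^{c-1} g(u)` with `g`
nondecreasing. For `0 < P < Q`, comparing `g` with `g(P)` gives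
`∫₀^P u^β κ ≤ g(P) P^c / c` and `∫_P^Q u^β κ ≥ g(P) (Q^c - P^c) / c`, and these two bounds
combine to `Q^c ∫₀^P u^β κ ≤ P^c ∫₀^Q u^β κ`. When `c = 0` the claim is just the monotonicity
of `∫₀^P κ` for positive `κ`.
-/

section PowerComparison

variable {f : ℝ → ℝ} {a b c M : ℝ}

theorem integral_const_mul_rpow_sub_one (hc : 0 < c) :
    ∫ u in a..b, M * u ^ (c - 1) = M * (b ^ c - a ^ c) / c := by
  rw [intervalIntegral.integral_const_mul, integral_rpow (Or.inl (by linarith)), sub_add_cancel,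
    mul_div_assoc]

theorem integral_le_mul_rpow_sub (hc : 0 < c) (hab : a ≤ b)
    (hf : IntervalIntegrable f volume a b) (hle : ∀ u ∈ Ioo a b, f u ≤ M * u ^ (c - 1)) :
    ∫ u in a..b, f u ≤ M * (b ^ c - a ^ c) / c := by
  calc ∫ u in a..b, f u ≤ ∫ u in a..b, M * u ^ (c - 1) :=
        integral_mono_on_of_le_Ioo hab hf
          ((intervalIntegrable_rpow' (by linarith)).const_mul M) hle
    _ = M * (b ^ c - a ^ c) / c := integral_const_mul_rpow_sub_one hc

theorem mul_rpow_sub_le_integral (hc : 0 < c) (hab : a ≤ b)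
    (hf : IntervalIntegrable f volume a b) (hle : ∀ u ∈ Ioo a b, M * u ^ (c - 1) ≤ f u) :
    M * (b ^ c - a ^ c) / c ≤ ∫ u in a..b, f u := by
  calc M * (b ^ c - a ^ c) / c = ∫ u in a..b, M * u ^ (c - 1) :=
        (integral_const_mul_rpow_sub_one hc).symm
    _ ≤ ∫ u in a..b, f u :=
        integral_mono_on_of_le_Ioo hab ((intervalIntegrable_rpow' (by linarith)).const_mul M)
          hf hle

end PowerComparison

theorem monotoneOn_rpow_neg_mul_integral {f g : ℝ → ℝ} {c : ℝ} (hc : 0 < c)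
    (hg : MonotoneOn g (Ioi 0)) (hfg : ∀ u, 0 < u → f u = u ^ (c - 1) * g u)
    (hf : ∀ b, 0 < b → IntervalIntegrable f volume 0 b) :
    MonotoneOn (fun P => P ^ (-c) * ∫ u in 0..P, f u) (Ioi 0) := by
  intro P (hP : 0 < P) Q (hQ : 0 < Q) hPQ
  have hPQint : IntervalIntegrable f volume P Q := (hf P hP).symm.trans (hf Q hQ)
  have head : ∫ u in 0..P, f u ≤ g P * P ^ c / c := by
    have := integral_le_mul_rpow_sub (M := g P) hc hP.le (hf P hP) fun u hu => by
      rw [hfg u hu.1, mul_comm (g P)]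
      exact mul_le_mul_of_nonneg_left (hg hu.1 hP hu.2.le) (Real.rpow_nonneg hu.1.le _)
    rwa [Real.zero_rpow hc.ne', sub_zero] at this
  have tail : g P * (Q ^ c - P ^ c) / c ≤ ∫ u in P..Q, f u :=
    mul_rpow_sub_le_integral hc hPQ hPQint fun u hu => by
      have hu0 : 0 < u := hP.trans hu.1
      rw [hfg u hu0, mul_comm (g P)]
      exact mul_le_mul_of_nonneg_left (hg hP hu0 hu.1.le) (Real.rpow_nonneg hu0.le _)
  have hPc : 0 < P ^ c := Real.rpow_pos_of_pos hP c
  have hPQc : P ^ c ≤ Q ^ c := Real.rpow_le_rpow hP.le hPQ hc.le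
  set I := ∫ u in 0..P, f u
  set J := ∫ u in P..Q, f u
  show P ^ (-c) * I ≤ Q ^ (-c) * ∫ u in 0..Q, f u
  rw [← integral_add_adjacent_intervals (hf P hP) hPQint, Real.rpow_neg hP.le,
    Real.rpow_neg hQ.le, inv_mul_eq_div, inv_mul_eq_div,
    div_le_div_iff₀ hPc (Real.rpow_pos_of_pos hQ c)]
  calc I * Q ^ c = I * P ^ c + I * (Q ^ c - P ^ c) := by ring
    _ ≤ I * P ^ c + g P * P ^ c / c * (Q ^ c - P ^ c) := by gcongr
    _ = I * P ^ c + P ^ c * (g P * (Q ^ c - P ^ c) / c) := by ring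
    _ ≤ I * P ^ c + P ^ c * J := by gcongr
    _ = (I + J) * P ^ c := by ring

theorem stmt3_general (κ : ℝ → ℝ) (a : ℝ) (ha0 : 0 ≤ a)
    (hκpos : ∀ u, 0 < u → 0 < κ u)
    (hκint : ∀ b : ℝ, 0 < b → IntegrableOn κ (Set.Ioc 0 b))
    (hκa : MonotoneOn (fun P : ℝ => P ^ (1 - a) * κ P) (Set.Ioi 0)) :
    ∀ β : ℝ, 0 ≤ β →
      MonotoneOn (fun P : ℝ => P ^ (-(a + β)) * ∫ u in (0:ℝ)..P, u ^ β * κ u)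
        (Set.Ioi 0) := by
  intro β hβ
  have hint (b : ℝ) (hb : 0 < b) : IntervalIntegrable (fun u => u ^ β * κ u) volume 0 b :=
    ((intervalIntegrable_iff_integrableOn_Ioc_of_le hb.le).2 (hκint b hb)).continuousOn_mul
      (Real.continuous_rpow_const hβ).continuousOn
  rcases (add_nonneg ha0 hβ).eq_or_lt with hc | hc
  · obtain ⟨rfl, rfl⟩ : a = 0 ∧ β = 0 := ⟨by linarith, by linarith⟩
    intro P (hP : 0 < P) Q (hQ : 0 < Q) hPQ
    simp only [add_zero, neg_zero, Real.rpow_zero, one_mul]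
    exact integral_mono_interval le_rfl hP.le hPQ
      ((ae_restrict_iff' measurableSet_Ioc).2 (.of_forall fun u hu => (hκpos u hu.1).le))
      (by simpa using hint Q hQ)
  · refine monotoneOn_rpow_neg_mul_integral hc hκa (fun u hu => ?_) hint
    rw [← mul_assoc, ← Real.rpow_add hu]
    ring_nf

theorem stmt3 (κ : ℝ → ℝ) (a : ℝ) (ha0 : 0 ≤ a) (ha1 : a ≤ 1)
    (hκpos : ∀ u, 0 < u → 0 < κ u)
    (hκint : ∀ b : ℝ, 0 < b → IntegrableOn κ (Set.Ioc 0 b))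
    (hκa : MonotoneOn (fun P : ℝ => P ^ (1 - a) * κ P) (Set.Ioi 0)) :
    ∀ β : ℝ, 0 ≤ β →
      MonotoneOn (fun P : ℝ => P ^ (-(a + β)) * ∫ u in (0:ℝ)..P, u ^ β * κ u)
        (Set.Ioi 0) :=
  stmt3_general κ a ha0 hκpos hκint hκa
end

section
/- Let X, Y be Banach spaces, G continuously Fréchet differentiable on B(x*, δ) with G(x*) = 0 and G'(x*) invertible. Suppose κ₀ is a positive integrable nondecreasing function with ‖[G'(x*)]⁻¹(G'(x* + τ(x − x*)) − G'(x*))‖ ≤ ∫₀^{2τ‖x−x*‖} κ₀(u) du for all x ∈ B(x*, δ) and 0 ≤ τ ≤ 1, and that (1/(2δ)) ∫₀^{2δ} κ₀(u)(2δ − u) du < 1. Then x* is the unique solution of G(x) = 0 in B(x*, δ). -/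
/-!
If `y ≠ x*` were another zero in the ball, apply the mean value inequality to
`t ↦ A (G (x* + t • (y - x*))) - t • (y - x*)` on `[0, 1]`: its displacement is `-(y - x*)` and
the center condition bounds its derivative by `F (2 t ‖y - x*‖) ‖y - x*‖ ≤ F (2 δ t) ‖y - x*‖`,
where `F` is the (monotone) primitive of `κ₀`. By Fubini,
`∫₀¹ F (2 δ t) dt = (1 / (2 δ)) ∫₀^{2δ} κ₀ u (2 δ - u) du < 1`, so `‖y - x*‖ < ‖y - x*‖`.
-/

open MeasureTheory intervalIntegral Set

theorem integral_integral_eq_integral_mul_sub {κ : ℝ → ℝ} {a b : ℝ} (hab : a ≤ b)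
    (hκ : IntegrableOn κ (Ioc a b)) :
    ∫ s in a..b, ∫ u in a..s, κ u = ∫ u in a..b, κ u * (b - u) := by
  set F : ℝ → ℝ → ℝ := fun s u => {x | x ≤ s}.indicator κ u
  have hF : IntegrableOn F.uncurry (uIoc a b ×ˢ uIoc a b) := by
    rw [uIoc_of_le hab, IntegrableOn, Measure.volume_eq_prod, ← Measure.prod_restrict]
    exact (hκ.comp_snd _).indicator (measurableSet_le measurable_snd measurable_fst)
  have houter : ∀ u ∈ Ioc a b, ∫ s in a..b, F s u = κ u * (b - u) := by
    intro u hu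
    have hF_eq : (F · u) = (Ici u).indicator (fun _ => κ u) := by
      ext s; simp [F, indicator_apply]
    have hset : Ioc a b ∩ Ici u = Icc u b := by
      ext s; simp only [mem_inter_iff, mem_Ioc, mem_Ici, mem_Icc]
      exact ⟨fun h => ⟨h.2, h.1.2⟩, fun h => ⟨⟨hu.1.trans_le h.1, h.2⟩, h.1⟩⟩
    rw [hF_eq, integral_of_le hab, setIntegral_indicator measurableSet_Ici, hset,
      setIntegral_const, Real.volume_real_Icc_of_le hu.2, smul_eq_mul, mul_comm]
  calc ∫ s in a..b, ∫ u in a..s, κ u = ∫ s in a..b, ∫ u in a..b, F s u :=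
        integral_congr fun s hs =>
          (intervalIntegral.integral_indicator (by rwa [uIcc_of_le hab] at hs)).symm
    _ = ∫ u in a..b, ∫ s in a..b, F s u := intervalIntegral_intervalIntegral_swap hF
    _ = ∫ u in a..b, κ u * (b - u) := integral_congr_ae' (.of_forall houter) (by simp [hab])

theorem monotoneOn_primitive_of_nonneg {κ : ℝ → ℝ} {a b : ℝ} (hκ : IntegrableOn κ (Ioc a b))
    (hκ_nonneg : ∀ u ∈ Ioc a b, 0 ≤ κ u) :
    MonotoneOn (fun s => ∫ u in a..s, κ u) (Icc a b) := by
  intro s hs s' hs' hss'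
  refine integral_mono_interval le_rfl hs.1 hss'
    ((ae_restrict_iff' measurableSet_Ioc).mpr (.of_forall fun u hu => ?_)) ?_
  · exact hκ_nonneg u ⟨hu.1, hu.2.trans hs'.2⟩
  · rw [intervalIntegrable_iff_integrableOn_Ioc_of_le hs'.1]
    exact hκ.mono_set (Ioc_subset_Ioc le_rfl hs'.2)

theorem integral_primitive_comp_mul {κ : ℝ → ℝ} {b : ℝ} (hb : 0 < b)
    (hκ : IntegrableOn κ (Ioc 0 b)) :
    ∫ t in (0 : ℝ)..1, ∫ u in (0 : ℝ)..b * t, κ u =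
      (1 / b) * ∫ u in (0 : ℝ)..b, κ u * (b - u) := by
  rw [integral_comp_mul_left (fun s => ∫ u in (0 : ℝ)..s, κ u) hb.ne', mul_zero, mul_one,
    integral_integral_eq_integral_mul_sub hb.le hκ, smul_eq_mul, one_div]

theorem norm_sub_le_integral_mul_norm_of_apply_eq {X Y : Type*}
    [NormedAddCommGroup X] [NormedSpace ℝ X] [NormedAddCommGroup Y] [NormedSpace ℝ Y]
    {G : X → Y} {G' : X → X →L[ℝ] Y} {A : Y →L[ℝ] X} {x y : X} {ω : ℝ → ℝ}
    (hG : ∀ t ∈ Icc (0 : ℝ) 1, HasFDerivAt G (G' (x + t • (y - x))) (x + t • (y - x)))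
    (hA : A.comp (G' x) = ContinuousLinearMap.id ℝ X) (hxy : G x = G y)
    (hω : IntervalIntegrable ω volume 0 1)
    (hbound : ∀ t ∈ Ioo (0 : ℝ) 1, ‖A.comp (G' (x + t • (y - x)) - G' x)‖ ≤ ω t) :
    ‖y - x‖ ≤ (∫ t in (0 : ℝ)..1, ω t) * ‖y - x‖ := by
  set f : ℝ → X := fun t => A (G (x + t • (y - x))) - t • (y - x)
  have hf : ∀ t ∈ Icc (0 : ℝ) 1,
      HasDerivAt f ((A.comp (G' (x + t • (y - x)) - G' x)) (y - x)) t := by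
    intro t ht
    have hpath : HasDerivAt (fun t : ℝ => x + t • (y - x)) (y - x) t := by
      simpa using ((hasDerivAt_id t).smul_const (y - x)).const_add x
    have hdir : A (G' x (y - x)) = y - x := by
      simpa using congrArg (fun L : X →L[ℝ] X => L (y - x)) hA
    refine ((A.hasFDerivAt.comp_hasDerivAt t ((hG t ht).comp_hasDerivAt t hpath)).sub
      ((hasDerivAt_id t).smul_const (y - x))).congr_deriv ?_
    symm
    rw [ContinuousLinearMap.comp_apply, sub_apply, map_sub, hdir, one_smul]
  have hdisp : f 1 - f 0 = -(y - x) := by simp [f, hxy]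
  calc ‖y - x‖ = ‖f 1 - f 0‖ := by rw [hdisp, norm_neg]
    _ ≤ ∫ t in (0 : ℝ)..1, ω t * ‖y - x‖ := by
        refine norm_sub_le_integral_of_norm_deriv_le_of_le zero_le_one
          (fun t ht => (hf t ht).continuousAt.continuousWithinAt)
          (fun t ht => (hf t (Ioo_subset_Icc_self ht)).differentiableAt.differentiableWithinAt)
          (.of_forall fun t ht => ?_) (hω.mul_const _)
        rw [(hf t (Ioo_subset_Icc_self ht)).deriv]
        exact (ContinuousLinearMap.le_opNorm _ _).trans
          (mul_le_mul_of_nonneg_right (hbound t ht) (norm_nonneg _))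
    _ = (∫ t in (0 : ℝ)..1, ω t) * ‖y - x‖ := integral_mul_const _ _

theorem stmt5_general {X Y : Type*} [NormedAddCommGroup X] [NormedSpace ℝ X]
    [NormedAddCommGroup Y] [NormedSpace ℝ Y]
    (G : X → Y) (G' : X → (X →L[ℝ] Y)) (xs : X) (δ : ℝ) (hδ : 0 < δ)
    (hG : G xs = 0)
    (hdiff : ∀ x ∈ Metric.ball xs δ, HasFDerivAt G (G' x) x)
    (A : Y →L[ℝ] X)
    (hA1 : A.comp (G' xs) = ContinuousLinearMap.id ℝ X)
    (κ₀ : ℝ → ℝ) (hκ₀pos : ∀ u, 0 < u → 0 < κ₀ u)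
    (hκ₀int : IntegrableOn κ₀ (Set.Ioc 0 (2 * δ)))
    (hcenter : ∀ x ∈ Metric.ball xs δ, ∀ τ ∈ Set.Icc (0:ℝ) 1,
      ‖A.comp (G' (xs + τ • (x - xs)) - G' xs)‖ ≤
        ∫ u in (0:ℝ)..(2 * τ * ‖x - xs‖), κ₀ u)
    (hsmall : (1 / (2 * δ)) * ∫ u in (0:ℝ)..(2 * δ), κ₀ u * (2 * δ - u) < 1) :
    ∀ y ∈ Metric.ball xs δ, G y = 0 → y = xs := by
  intro y hy hGy
  by_contra hne
  have hr : 0 < ‖y - xs‖ := norm_pos_iff.mpr (sub_ne_zero.mpr hne)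
  have hrδ : ‖y - xs‖ < δ := mem_ball_iff_norm.mp hy
  have hsegment : ∀ t ∈ Icc (0 : ℝ) 1, xs + t • (y - xs) ∈ Metric.ball xs δ := fun t ht =>
    (convex_ball xs δ).add_smul_sub_mem (Metric.mem_ball_self hδ) hy ht
  have hF_mono := monotoneOn_primitive_of_nonneg hκ₀int fun u hu => (hκ₀pos u hu.1).le
  have hscale : MapsTo (2 * δ * ·) (Icc 0 1) (Icc 0 (2 * δ)) := fun t ht =>
    ⟨by nlinarith [ht.1], by nlinarith [ht.2]⟩
  set ω : ℝ → ℝ := fun t => ∫ u in (0 : ℝ)..2 * δ * t, κ₀ u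
  have hω : MonotoneOn ω (uIcc 0 1) := by
    rw [uIcc_of_le zero_le_one]
    exact hF_mono.comp ((monotone_id.const_mul (by positivity)).monotoneOn _) hscale
  have hbound : ∀ t ∈ Ioo (0 : ℝ) 1, ‖A.comp (G' (xs + t • (y - xs)) - G' xs)‖ ≤ ω t :=
    fun t ht => (hcenter y hy t (Ioo_subset_Icc_self ht)).trans <|
      hF_mono ⟨by nlinarith [ht.1], by nlinarith [ht.1, ht.2]⟩
        (hscale (Ioo_subset_Icc_self ht)) (by nlinarith [ht.1])
  have key := norm_sub_le_integral_mul_norm_of_apply_eq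
    (fun t ht => hdiff _ (hsegment t ht)) hA1 (hG.trans hGy.symm) hω.intervalIntegrable hbound
  rw [integral_primitive_comp_mul (by positivity) hκ₀int] at key
  nlinarith

theorem stmt5 {X Y : Type*} [NormedAddCommGroup X] [NormedSpace ℝ X] [CompleteSpace X]
    [NormedAddCommGroup Y] [NormedSpace ℝ Y] [CompleteSpace Y]
    (G : X → Y) (G' : X → (X →L[ℝ] Y)) (xs : X) (δ : ℝ) (hδ : 0 < δ)
    (hG : G xs = 0)
    (hdiff : ∀ x ∈ Metric.ball xs δ, HasFDerivAt G (G' x) x)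
    (hcont : ContinuousOn G' (Metric.ball xs δ))
    (A : Y →L[ℝ] X)
    (hA1 : A.comp (G' xs) = ContinuousLinearMap.id ℝ X)
    (hA2 : (G' xs).comp A = ContinuousLinearMap.id ℝ Y)
    (κ₀ : ℝ → ℝ) (hκ₀pos : ∀ u, 0 < u → 0 < κ₀ u)
    (hκ₀int : IntegrableOn κ₀ (Set.Ioc 0 (2 * δ)))
    (hκ₀mono : MonotoneOn κ₀ (Set.Ici 0))
    (hcenter : ∀ x ∈ Metric.ball xs δ, ∀ τ ∈ Set.Icc (0:ℝ) 1,
      ‖A.comp (G' (xs + τ • (x - xs)) - G' xs)‖ ≤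
        ∫ u in (0:ℝ)..(2 * τ * ‖x - xs‖), κ₀ u)
    (hsmall : (1 / (2 * δ)) * ∫ u in (0:ℝ)..(2 * δ), κ₀ u * (2 * δ - u) < 1) :
    ∀ y ∈ Metric.ball xs δ, G y = 0 → y = xs :=
  stmt5_general G G' xs δ hδ hG hdiff A hA1 κ₀ hκ₀pos hκ₀int hcenter hsmall
end

section
/- Let X, Y be Banach spaces, G continuously Fréchet differentiable on B(x*, δ) with G(x*) = 0 and G'(x*) invertible. Suppose constants κ₀ > 0 satisfy ‖[G'(x*)]⁻¹(G'(x) − G'(x*))‖ ≤ 2κ₀‖x − x*‖ for all x ∈ B(x*, δ), and δ ≤ 1/κ₀. Then x* is the unique zero of G in B(x*, δ). -/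
theorem stmt6 {X Y : Type*} [NormedAddCommGroup X] [NormedSpace ℝ X] [CompleteSpace X]
    [NormedAddCommGroup Y] [NormedSpace ℝ Y] [CompleteSpace Y]
    (G : X → Y) (G' : X → (X →L[ℝ] Y)) (xs : X) (δ : ℝ) (hδ : 0 < δ)
    (hG : G xs = 0)
    (hdiff : ∀ x ∈ Metric.ball xs δ, HasFDerivAt G (G' x) x)
    (hcont : ContinuousOn G' (Metric.ball xs δ))
    (A : Y →L[ℝ] X)
    (hA1 : A.comp (G' xs) = ContinuousLinearMap.id ℝ X)
    (hA2 : (G' xs).comp A = ContinuousLinearMap.id ℝ Y)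
    (κ₀ : ℝ) (hκ₀ : 0 < κ₀)
    (hcenter : ∀ x ∈ Metric.ball xs δ,
      ‖A.comp (G' x - G' xs)‖ ≤ 2 * κ₀ * ‖x - xs‖)
    (hδκ : δ ≤ 1 / κ₀) :
    ∀ y ∈ Metric.ball xs δ, G y = 0 → y = xs := by
  intro y hy hGy
  set h : X := y - xs with hh
  have hnorm : ‖h‖ < δ := by
    simpa [hh, dist_eq_norm] using hy
  set c : ℝ → X := fun t => xs + t • h with hc
  have hmem : ∀ t ∈ Set.uIcc (0:ℝ) 1, c t ∈ Metric.ball xs δ := by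
    intro t ht
    rw [Set.uIcc_of_le (by norm_num)] at ht
    have : ‖t • h‖ ≤ ‖h‖ := by
      rw [norm_smul, Real.norm_eq_abs, abs_of_nonneg ht.1]
      nlinarith [norm_nonneg h, ht.2]
    simp only [hc, Metric.mem_ball, dist_eq_norm, add_sub_cancel_left]
    exact lt_of_le_of_lt this hnorm
  have hcderiv : ∀ t : ℝ, HasDerivAt c h t := by
    intro t
    simpa [hc] using ((hasDerivAt_id t).smul_const h).const_add xs
  have hgderiv : ∀ t ∈ Set.uIcc (0:ℝ) 1,
      HasDerivAt (fun t => A (G (c t))) (A ((G' (c t)) h)) t := by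
    intro t ht
    exact (A.hasFDerivAt).comp_hasDerivAt t
      (((hdiff (c t) (hmem t ht)).comp_hasDerivAt t (hcderiv t)))
  have hccont : ContinuousOn c (Set.uIcc (0:ℝ) 1) :=
    (continuous_const.add (continuous_id.smul continuous_const)).continuousOn
  have hicont : ContinuousOn (fun t => A ((G' (c t)) h)) (Set.uIcc (0:ℝ) 1) := by
    exact A.continuous.comp_continuousOn
      (((hcont.comp hccont hmem).clm_apply continuousOn_const))
  have hintble : IntervalIntegrable (fun t => A ((G' (c t)) h)) MeasureTheory.volume 0 1 :=
    hicont.intervalIntegrable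
  have hftc : ∫ t in (0:ℝ)..1, A ((G' (c t)) h) = A (G (c 1)) - A (G (c 0)) :=
    intervalIntegral.integral_eq_sub_of_hasDerivAt hgderiv hintble
  have hc1 : c 1 = y := by simp [hc, hh]
  have hc0 : c 0 = xs := by simp [hc]
  have hzero : ∫ t in (0:ℝ)..1, A ((G' (c t)) h) = 0 := by
    rw [hftc, hc1, hc0, hGy, hG]; simp
  have hid : A ((G' xs) h) = h := by
    have := congrArg (fun T : X →L[ℝ] X => T h) hA1
    simpa using this
  have key : h = ∫ t in (0:ℝ)..1, (A ((G' xs) h) - A ((G' (c t)) h)) := by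
    rw [intervalIntegral.integral_sub (by simp : IntervalIntegrable
      (fun _ : ℝ => A ((G' xs) h)) MeasureTheory.volume 0 1) hintble, hzero]
    simp [hid]
  have hbound : ∀ t ∈ Set.uIcc (0:ℝ) 1,
      ‖A ((G' xs) h) - A ((G' (c t)) h)‖ ≤ 2 * κ₀ * t * ‖h‖ * ‖h‖ := by
    intro t ht
    have hmemt := hmem t ht
    rw [Set.uIcc_of_le (by norm_num)] at ht
    have : A ((G' xs) h) - A ((G' (c t)) h) = -((A.comp (G' (c t) - G' xs)) h) := by
      simp [ContinuousLinearMap.comp_apply, ContinuousLinearMap.sub_apply, map_sub]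
    rw [this, norm_neg]
    calc ‖(A.comp (G' (c t) - G' xs)) h‖ ≤ ‖A.comp (G' (c t) - G' xs)‖ * ‖h‖ :=
          (A.comp (G' (c t) - G' xs)).le_opNorm h
      _ ≤ (2 * κ₀ * ‖c t - xs‖) * ‖h‖ := by
          gcongr; exact hcenter _ hmemt
      _ = 2 * κ₀ * t * ‖h‖ * ‖h‖ := by
          have : ‖c t - xs‖ = t * ‖h‖ := by
            simp [hc, norm_smul, Real.norm_eq_abs, abs_of_nonneg ht.1]
          rw [this]; ring
  have h2 : (∫ t in (0:ℝ)..1, 2 * κ₀ * t * ‖h‖ * ‖h‖) = κ₀ * ‖h‖ * ‖h‖ := by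
    have e : (fun t : ℝ => 2 * κ₀ * t * ‖h‖ * ‖h‖)
        = fun t : ℝ => (2 * κ₀ * ‖h‖ * ‖h‖) * t := by ext t; ring
    rw [e, intervalIntegral.integral_const_mul, integral_id]
    ring
  have h1 : ‖∫ t in (0:ℝ)..1, (A ((G' xs) h) - A ((G' (c t)) h))‖
      ≤ |∫ t in (0:ℝ)..1, 2 * κ₀ * t * ‖h‖ * ‖h‖| := by
    apply intervalIntegral.norm_integral_le_abs_of_norm_le
    · filter_upwards [MeasureTheory.ae_restrict_mem measurableSet_uIoc] with t ht
      exact hbound t (Set.uIoc_subset_uIcc ht)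
    · apply Continuous.intervalIntegrable; continuity
  have hnle : ‖h‖ ≤ κ₀ * ‖h‖ * ‖h‖ := by
    have habs : |∫ t in (0:ℝ)..1, 2 * κ₀ * t * ‖h‖ * ‖h‖| = κ₀ * ‖h‖ * ‖h‖ := by
      rw [h2, abs_of_nonneg (by positivity)]
    calc ‖h‖ = ‖∫ t in (0:ℝ)..1, (A ((G' xs) h) - A ((G' (c t)) h))‖ := by rw [← key]
      _ ≤ κ₀ * ‖h‖ * ‖h‖ := by rw [← habs]; exact h1
  by_contra hne
  have hne' : h ≠ 0 := fun h0 => hne (by rwa [hh, sub_eq_zero] at h0)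
  have hpos : 0 < ‖h‖ := norm_pos_iff.mpr hne'
  have h3 : 1 ≤ κ₀ * ‖h‖ := by
    have : 1 * ‖h‖ ≤ (κ₀ * ‖h‖) * ‖h‖ := by rw [one_mul]; linarith [hnle]
    exact le_of_mul_le_mul_right this hpos
  have h4 : κ₀ * ‖h‖ < κ₀ * δ := mul_lt_mul_of_pos_left hnorm hκ₀
  have hκδ : κ₀ * δ ≤ 1 := by
    rw [le_div_iff₀ hκ₀] at hδκ; linarith
  linarith
end

section
/- Under the hypotheses that G(x*) = 0, G'(x*)⁻¹ exists, [G'(x*)]⁻¹ G' satisfies the radius Lipschitz condition ‖[G'(x*)]⁻¹(G'(x) − G'(x* + τ(x − x*)))‖ ≤ ∫_{2τρ(x)}^{2ρ(x)} κ(u) du with κ nondecreasing, and the center Lipschitz condition with κ₀ ≤ κ, if x_t ∈ B(x*, δ) with ∫₀^{2δ} κ₀(u) du < 1, then the Newton iterate y_t = x_t − [G'(x_t)]⁻¹ G(x_t) satisfies ‖y_t − x*‖ ≤ (∫₀^{2ρ(x_t)} κ(u) u du) / (2(1 − ∫₀^{2ρ(x_t)} κ₀(u) du)), where ρ(x) =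 ‖x − x*‖. -/
open MeasureTheory intervalIntegral Set

/-!
Write `v = xₜ - x*` and `ρ = ‖v‖`. Since `B = (B ∘ G'(x*)) ∘ A`, the Newton error is
`xₜ - B G(xₜ) - x* = -(B ∘ G'(x*)) A (G(xₜ) - G(x*) - G'(xₜ) v)`.
The center condition makes `A ∘ G'(xₜ)` an `O(c)` perturbation of the identity, with
`c = ∫₀^{2ρ} κ₀ < 1`, so the Banach lemma gives `‖B ∘ G'(x*)‖ ≤ 1 / (1 - c)`.
Along the segment `x* + τ v` the radius condition bounds the derivative of the Taylor remainder
of `A ∘ G` by `ρ ∫_{2τρ}^{2ρ} κ`, and integrating over `τ ∈ [0, 1]` (Fubini) turns this into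
`½ ∫₀^{2ρ} κ(u) u du`.
-/

theorem intervalIntegrable_integral_lower_mul {f : ℝ → ℝ} {R : ℝ} (hR : 0 ≤ R)
    (hf : IntervalIntegrable f volume 0 R) :
    IntervalIntegrable (fun τ => ∫ u in τ * R..R, f u) volume 0 1 := by
  refine ContinuousOn.intervalIntegrable ?_
  have hprim := continuousOn_primitive_interval_left ((intervalIntegrable_iff' (by finiteness)).1 hf)
  refine hprim.comp (by fun_prop) fun τ hτ => ?_
  rw [uIcc_of_le zero_le_one] at hτ
  rw [uIcc_of_le hR]
  exact ⟨mul_nonneg hτ.1 hR, mul_le_of_le_one_left hR hτ.2⟩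

theorem mul_integral_integral_lower_mul {f : ℝ → ℝ} {R : ℝ} (hR : 0 ≤ R)
    (hf : IntervalIntegrable f volume 0 R) :
    R * ∫ τ in (0:ℝ)..1, ∫ u in τ * R..R, f u = ∫ u in (0:ℝ)..R, f u * u := by
  rcases hR.eq_or_lt with rfl | hR
  · simp
  set μ := volume.restrict (Ioc (0:ℝ) 1)
  set ν := volume.restrict (Ioc (0:ℝ) R)
  -- Fubini on the triangle `{(τ, u) | τ R < u}`.
  set F : ℝ → ℝ → ℝ := fun τ => (Ioi (τ * R)).indicator f
  have hF : Integrable (Function.uncurry F) (μ.prod ν) :=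
    (hf.1.comp_snd μ).indicator (measurableSet_lt (by fun_prop) (by fun_prop))
  have slice_τ : ∀ τ ∈ Ioc (0:ℝ) 1, ∫ u in τ * R..R, f u = ∫ u, F τ u ∂ν := by
    intro τ hτ
    rw [setIntegral_indicator measurableSet_Ioi, Ioc_inter_Ioi,
      max_eq_right (mul_nonneg hτ.1.le hR.le), integral_of_le (mul_le_of_le_one_left hR.le hτ.2)]
  have slice_u : ∀ u ∈ Ioc (0:ℝ) R, ∫ τ, F τ u ∂μ = u / R * f u := by
    intro u hu
    have hF_u : ∀ τ, F τ u = (Iio (u / R)).indicator (fun _ => f u) τ := fun τ => by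
      simp only [F, indicator_apply, mem_Ioi, mem_Iio, lt_div_iff₀ hR]
    have hslice : Ioc 0 1 ∩ Iio (u / R) = Ioo 0 (u / R) := by
      ext τ
      simp only [mem_inter_iff, mem_Ioc, mem_Iio, mem_Ioo]
      exact ⟨fun h => ⟨h.1.1, h.2⟩,
        fun h => ⟨⟨h.1, h.2.le.trans ((div_le_one hR).2 hu.2)⟩, h.2⟩⟩
    simp only [hF_u]
    rw [setIntegral_indicator measurableSet_Iio, hslice, setIntegral_const, smul_eq_mul,
      Real.volume_real_Ioo_of_le (div_pos hu.1 hR).le, sub_zero]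
  calc R * ∫ τ in (0:ℝ)..1, ∫ u in τ * R..R, f u
      = R * ∫ τ, ∫ u, F τ u ∂ν ∂μ := by
        rw [integral_of_le zero_le_one, setIntegral_congr_fun measurableSet_Ioc slice_τ]
    _ = R * ∫ u, ∫ τ, F τ u ∂μ ∂ν := by rw [integral_integral_swap hF]
    _ = ∫ u in (0:ℝ)..R, f u * u := by
        rw [setIntegral_congr_fun measurableSet_Ioc slice_u, integral_of_le hR.le,
          ← MeasureTheory.integral_const_mul]
        refine setIntegral_congr_fun measurableSet_Ioc fun u _ => ?_
        field_simp

section Remainder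

variable {E F : Type*} [NormedAddCommGroup E] [NormedSpace ℝ E]
  [NormedAddCommGroup F] [NormedSpace ℝ F] {f : E → F} {f' : E → E →L[ℝ] F} {a b : E}

theorem norm_sub_sub_fderiv_le_integral {ψ : ℝ → ℝ}
    (hf : ∀ t ∈ Icc (0:ℝ) 1, HasFDerivAt f (f' (a + t • (b - a))) (a + t • (b - a)))
    (hψ : ∀ t ∈ Ioo (0:ℝ) 1, ‖f' b - f' (a + t • (b - a))‖ ≤ ψ t)
    (hψi : IntervalIntegrable ψ volume 0 1) :
    ‖f b - f a - f' b (b - a)‖ ≤ ‖b - a‖ * ∫ t in (0:ℝ)..1, ψ t := by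
  set g : ℝ → F := fun t => f (a + t • (b - a)) - t • f' b (b - a)
  have hg : ∀ t ∈ Icc (0:ℝ) 1, HasDerivAt g ((f' (a + t • (b - a)) - f' b) (b - a)) t := by
    intro t ht
    have hline : HasDerivAt (fun t : ℝ => a + t • (b - a)) (b - a) t := by
      simpa using ((hasDerivAt_id t).smul_const (b - a)).const_add a
    have := ((hf t ht).comp_hasDerivAt t hline).sub ((hasDerivAt_id t).smul_const (f' b (b - a)))
    rwa [one_smul] at this
  have hg_deriv : ∀ t ∈ Ioo (0:ℝ) 1, ‖deriv g t‖ ≤ ‖b - a‖ * ψ t := fun t ht =>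
    calc ‖deriv g t‖ ≤ ‖f' (a + t • (b - a)) - f' b‖ * ‖b - a‖ := by
          rw [(hg t (Ioo_subset_Icc_self ht)).deriv]
          exact ContinuousLinearMap.le_opNorm _ _
      _ ≤ ‖b - a‖ * ψ t := by
          rw [norm_sub_rev, mul_comm]
          exact mul_le_mul_of_nonneg_left (hψ t ht) (norm_nonneg _)
  have hdisp := norm_sub_le_integral_of_norm_deriv_le_of_le zero_le_one
    (fun t ht => (hg t ht).continuousAt.continuousWithinAt)
    (fun t ht => (hg t (Ioo_subset_Icc_self ht)).differentiableAt.differentiableWithinAt)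
    (ae_of_all _ hg_deriv) (hψi.const_mul _)
  rw [intervalIntegral.integral_const_mul] at hdisp
  convert hdisp using 2
  simp only [g, zero_smul, add_zero, one_smul, add_sub_cancel]
  abel

theorem norm_sub_sub_fderiv_le_of_radius_lipschitz {κ : ℝ → ℝ}
    (hf : ∀ t ∈ Icc (0:ℝ) 1, HasFDerivAt f (f' (a + t • (b - a))) (a + t • (b - a)))
    (hradius : ∀ t ∈ Ioo (0:ℝ) 1,
      ‖f' b - f' (a + t • (b - a))‖ ≤ ∫ u in 2 * t * ‖b - a‖..2 * ‖b - a‖, κ u)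
    (hκ : IntervalIntegrable κ volume 0 (2 * ‖b - a‖)) :
    ‖f b - f a - f' b (b - a)‖ ≤ (∫ u in (0:ℝ)..2 * ‖b - a‖, κ u * u) / 2 := by
  have hψ : ∀ t ∈ Ioo (0:ℝ) 1,
      ‖f' b - f' (a + t • (b - a))‖ ≤ ∫ u in t * (2 * ‖b - a‖)..2 * ‖b - a‖, κ u := by
    intro t ht
    rw [← mul_assoc, mul_comm t 2]
    exact hradius t ht
  calc ‖f b - f a - f' b (b - a)‖
      ≤ ‖b - a‖ * ∫ t in (0:ℝ)..1, ∫ u in t * (2 * ‖b - a‖)..2 * ‖b - a‖, κ u :=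
        norm_sub_sub_fderiv_le_integral hf hψ
          (intervalIntegrable_integral_lower_mul (by positivity) hκ)
    _ = (2 * ‖b - a‖ * ∫ t in (0:ℝ)..1, ∫ u in t * (2 * ‖b - a‖)..2 * ‖b - a‖, κ u) / 2 := by
        ring
    _ = (∫ u in (0:ℝ)..2 * ‖b - a‖, κ u * u) / 2 := by
        rw [mul_integral_integral_lower_mul (by positivity) hκ]

end Remainder

section Operators

variable {𝕜 X Y : Type*} [NontriviallyNormedField 𝕜] [SeminormedAddCommGroup X]
  [NormedSpace 𝕜 X] [SeminormedAddCommGroup Y] [NormedSpace 𝕜 Y]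

open ContinuousLinearMap

theorem ContinuousLinearMap.norm_mul_one_sub_norm_le_of_comp_id_add_eq_id {T S : X →L[𝕜] X}
    (h : T.comp (.id 𝕜 X + S) = .id 𝕜 X) : ‖T‖ * (1 - ‖S‖) ≤ 1 := by
  have hT : T = .id 𝕜 X - T.comp S := by
    rw [← h, comp_add, comp_id, add_sub_cancel_right]
  have : ‖T‖ ≤ 1 + ‖T‖ * ‖S‖ :=
    calc ‖T‖ = ‖.id 𝕜 X - T.comp S‖ := congrArg _ hT
      _ ≤ 1 + ‖T‖ * ‖S‖ := (norm_sub_le _ _).trans (add_le_add norm_id_le (opNorm_comp_le _ _))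
  linarith

theorem ContinuousLinearMap.norm_comp_mul_one_sub_norm_le {A B : Y →L[𝕜] X} {L₀ L : X →L[𝕜] Y}
    (hA₁ : A.comp L₀ = .id 𝕜 X) (hA₂ : L₀.comp A = .id 𝕜 Y) (hB : B.comp L = .id 𝕜 X) :
    ‖B.comp L₀‖ * (1 - ‖A.comp (L - L₀)‖) ≤ 1 := by
  refine norm_mul_one_sub_norm_le_of_comp_id_add_eq_id ?_
  rw [comp_sub, hA₁, add_sub_cancel, comp_assoc, ← comp_assoc L₀, hA₂, id_comp, hB]

theorem norm_newton_step_sub_le {G : X → Y} {A B : Y →L[𝕜] X} {L₀ L : X →L[𝕜] Y} {x x₀ : X}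
    (hA : L₀.comp A = .id 𝕜 Y) (hB : B.comp L = .id 𝕜 X) (hG : G x₀ = 0) :
    ‖x - B (G x) - x₀‖ ≤ ‖B.comp L₀‖ * ‖A (G x - G x₀ - L (x - x₀))‖ := by
  have hBA : ∀ y, B.comp L₀ (A y) = B y := fun y => by
    rw [← comp_apply, comp_assoc, hA, comp_id]
  have hBL : B (L (x - x₀)) = x - x₀ := by
    rw [← comp_apply, hB, id_apply]
  have hstep : x - B (G x) - x₀ = -B.comp L₀ (A (G x - G x₀ - L (x - x₀))) := by
    rw [hG, sub_zero, map_sub, map_sub, hBA, hBA, hBL]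
    abel
  rw [hstep, norm_neg]
  exact le_opNorm _ _

end Operators

theorem stmt8_general {X Y : Type*} [NormedAddCommGroup X] [NormedSpace ℝ X]
    [NormedAddCommGroup Y] [NormedSpace ℝ Y]
    (G : X → Y) (G' : X → (X →L[ℝ] Y)) (xs : X) (δ : ℝ)
    (hG : G xs = 0)
    (hdiff : ∀ x ∈ Metric.ball xs δ, HasFDerivAt G (G' x) x)
    (A : Y →L[ℝ] X)
    (hA1 : A.comp (G' xs) = ContinuousLinearMap.id ℝ X)
    (hA2 : (G' xs).comp A = ContinuousLinearMap.id ℝ Y)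
    (κ κ₀ : ℝ → ℝ)
    (hκ₀pos : ∀ u, 0 < u → 0 < κ₀ u)
    (hκint : IntegrableOn κ (Set.Ioc 0 (2 * δ)))
    (hκ₀int : IntegrableOn κ₀ (Set.Ioc 0 (2 * δ)))
    (hradius : ∀ x ∈ Metric.ball xs δ, ∀ τ ∈ Set.Icc (0:ℝ) 1,
      ‖A.comp (G' x - G' (xs + τ • (x - xs)))‖ ≤
        ∫ u in (2 * τ * ‖x - xs‖)..(2 * ‖x - xs‖), κ u)
    (hcenter : ∀ x ∈ Metric.ball xs δ,
      ‖A.comp (G' x - G' xs)‖ ≤ ∫ u in (0:ℝ)..(2 * ‖x - xs‖), κ₀ u)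
    (hsmall : (∫ u in (0:ℝ)..(2 * δ), κ₀ u) < 1)
    (xt : X) (hxt : xt ∈ Metric.ball xs δ)
    (B : Y →L[ℝ] X)
    (hB1 : B.comp (G' xt) = ContinuousLinearMap.id ℝ X) :
    ‖(xt - B (G xt)) - xs‖ ≤
      (∫ u in (0:ℝ)..(2 * ‖xt - xs‖), κ u * u) /
        (2 * (1 - ∫ u in (0:ℝ)..(2 * ‖xt - xs‖), κ₀ u)) := by
  set ρ := ‖xt - xs‖
  have hρ : ρ < δ := mem_ball_iff_norm.1 hxt
  set c := ∫ u in (0:ℝ)..2 * ρ, κ₀ u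
  set I := ∫ u in (0:ℝ)..2 * ρ, κ u * u
  set T := B.comp (G' xs)
  have hc : c < 1 := by
    refine lt_of_le_of_lt (integral_mono_interval le_rfl (by positivity) (by linarith) ?_
      ((intervalIntegrable_iff_integrableOn_Ioc_of_le (by linarith [norm_nonneg (xt - xs)])).2
        hκ₀int)) hsmall
    exact (ae_restrict_iff' measurableSet_Ioc).2 (ae_of_all _ fun u hu => (hκ₀pos u hu.1).le)
  have hT : ‖T‖ * (1 - c) ≤ 1 :=
    (mul_le_mul_of_nonneg_left (by linarith [hcenter xt hxt]) (norm_nonneg T)).trans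
      (ContinuousLinearMap.norm_comp_mul_one_sub_norm_le hA1 hA2 hB1)
  have hres : ‖A (G xt - G xs - G' xt (xt - xs))‖ ≤ I / 2 := by
    have hκ : IntervalIntegrable κ volume 0 (2 * ρ) :=
      (intervalIntegrable_iff_integrableOn_Ioc_of_le (by positivity)).2
        (hκint.mono_set (Ioc_subset_Ioc_right (by linarith)))
    have hseg : ∀ τ ∈ Icc (0:ℝ) 1, xs + τ • (xt - xs) ∈ Metric.ball xs δ := fun τ hτ =>
      (convex_ball xs δ).add_smul_sub_mem (Metric.mem_ball_self (Metric.pos_of_mem_ball hxt))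
        hxt hτ
    simpa only [map_sub, ContinuousLinearMap.comp_apply] using
      norm_sub_sub_fderiv_le_of_radius_lipschitz
        (f := fun x => A (G x)) (f' := fun x => A.comp (G' x))
        (fun τ hτ => A.hasFDerivAt.comp _ (hdiff _ (hseg τ hτ)))
        (fun τ hτ => by
          simpa only [ContinuousLinearMap.comp_sub] using
            hradius xt hxt τ (Ioo_subset_Icc_self hτ))
        hκ
  have hI : 0 ≤ I := by linarith [(norm_nonneg _).trans hres]
  calc ‖xt - B (G xt) - xs‖ ≤ ‖T‖ * ‖A (G xt - G xs - G' xt (xt - xs))‖ :=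
        norm_newton_step_sub_le hA2 hB1 hG
    _ ≤ ‖T‖ * (I / 2) := by gcongr
    _ ≤ I / (2 * (1 - c)) := by
        rw [le_div_iff₀ (by linarith)]
        nlinarith [mul_le_mul_of_nonneg_left hT hI]

theorem stmt8 {X Y : Type*} [NormedAddCommGroup X] [NormedSpace ℝ X] [CompleteSpace X]
    [NormedAddCommGroup Y] [NormedSpace ℝ Y] [CompleteSpace Y]
    (G : X → Y) (G' : X → (X →L[ℝ] Y)) (xs : X) (δ : ℝ) (hδ : 0 < δ)
    (hG : G xs = 0)
    (hdiff : ∀ x ∈ Metric.ball xs δ, HasFDerivAt G (G' x) x)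
    (hcont : ContinuousOn G' (Metric.ball xs δ))
    (A : Y →L[ℝ] X)
    (hA1 : A.comp (G' xs) = ContinuousLinearMap.id ℝ X)
    (hA2 : (G' xs).comp A = ContinuousLinearMap.id ℝ Y)
    (κ κ₀ : ℝ → ℝ)
    (hκpos : ∀ u, 0 < u → 0 < κ u) (hκ₀pos : ∀ u, 0 < u → 0 < κ₀ u)
    (hκmono : MonotoneOn κ (Set.Ici 0))
    (hle : ∀ u, 0 < u → κ₀ u ≤ κ u)
    (hκint : IntegrableOn κ (Set.Ioc 0 (2 * δ)))
    (hκ₀int : IntegrableOn κ₀ (Set.Ioc 0 (2 * δ)))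
    (hradius : ∀ x ∈ Metric.ball xs δ, ∀ τ ∈ Set.Icc (0:ℝ) 1,
      ‖A.comp (G' x - G' (xs + τ • (x - xs)))‖ ≤
        ∫ u in (2 * τ * ‖x - xs‖)..(2 * ‖x - xs‖), κ u)
    (hcenter : ∀ x ∈ Metric.ball xs δ,
      ‖A.comp (G' x - G' xs)‖ ≤ ∫ u in (0:ℝ)..(2 * ‖x - xs‖), κ₀ u)
    (hsmall : (∫ u in (0:ℝ)..(2 * δ), κ₀ u) < 1)
    (xt : X) (hxt : xt ∈ Metric.ball xs δ)
    (B : Y →L[ℝ] X)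
    (hB1 : B.comp (G' xt) = ContinuousLinearMap.id ℝ X)
    (hB2 : (G' xt).comp B = ContinuousLinearMap.id ℝ Y) :
    ‖(xt - B (G xt)) - xs‖ ≤
      (∫ u in (0:ℝ)..(2 * ‖xt - xs‖), κ u * u) /
        (2 * (1 - ∫ u in (0:ℝ)..(2 * ‖xt - xs‖), κ₀ u)) :=
  stmt8_general G G' xs δ hG hdiff A hA1 hA2 κ κ₀ hκ₀pos hκint hκ₀int hradius hcenter hsmall xt hxt
    B hB1
end

section
/- There is no positive integrable function L on (0, r] (for any r > 0) such that |g(x) − g(y^τ)| ≤ ∫_{τ(|x|+|y|)}^{|x|+|y|} L(u) du for all x, y ∈ (−r, r) and 0 ≤ τ ≤ 1, where g(x) = 1 + 2x sin(π/x) for x ≠ 0 and g(0) = 1. In fact any such L would satisfy ∫₀^{2r} L(u) du ≥ Σ_{k≥n₀} 4/(2k+1) = ∞ for some n₀. -/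
/-! With `x = y = 1/k` and `τ = 2k/(2k+1)` one gets `τ y = 2/(2k+1)`, where `sin (π / (τ y)) = ±1`,
so `|g x - g (τ y)| = 4/(2k+1)` while the integral runs over `(4/(2k+1), 2/k]`. These intervals
are pairwise disjoint, so integrability of `L` would make `∑ 4/(2k+1)` converge. -/

open MeasureTheory intervalIntegral Filter Function

noncomputable def oscSin (x : ℝ) : ℝ :=
  if x = 0 then 1 else 1 + 2 * x * Real.sin (Real.pi / x)

def HasIntegralModulus (g L : ℝ → ℝ) (r : ℝ) : Prop :=
  ∀ x ∈ Set.Ioo (-r) r, ∀ y ∈ Set.Ioo (-r) r, ∀ τ ∈ Set.Icc (0:ℝ) 1,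
    |g x - g (τ * y)| ≤ ∫ u in (τ * (|x| + |y|))..(|x| + |y|), L u

lemma oscSin_one_div_natCast {k : ℕ} (hk : 0 < k) : oscSin (1 / k) = 1 := by
  have hpi : Real.pi / (1 / k) = k * Real.pi := by field_simp
  rw [oscSin, if_neg (by positivity), hpi, Real.sin_nat_mul_pi, mul_zero, add_zero]

lemma oscSin_two_div (k : ℕ) : oscSin (2 / (2 * k + 1)) = 1 + 4 / (2 * k + 1) * (-1) ^ k := by
  have hpi : Real.pi / (2 / (2 * k + 1)) = k * Real.pi + Real.pi / 2 := by field_simp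
  rw [oscSin, if_neg (by positivity), hpi, Real.sin_add_pi_div_two, Real.cos_nat_mul_pi]
  ring

lemma abs_oscSin_sub {k : ℕ} (hk : 0 < k) :
    |oscSin (1 / k) - oscSin (2 / (2 * k + 1))| = 4 / (2 * k + 1) := by
  rw [oscSin_one_div_natCast hk, oscSin_two_div, sub_add_cancel_left, abs_neg, abs_mul,
    abs_pow, abs_neg, abs_one, one_pow, mul_one, abs_of_pos (by positivity)]

lemma four_div_le_two_div {k : ℕ} (hk : 0 < k) : (4 : ℝ) / (2 * k + 1) ≤ 2 / k := by
  have hk' : (1 : ℝ) ≤ k := by exact_mod_cast hk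
  rw [div_le_div_iff₀ (by positivity) (by positivity)]
  linarith

lemma four_div_le_setIntegral {L : ℝ → ℝ} {r : ℝ} (H : HasIntegralModulus oscSin L r) {k : ℕ}
    (hk : 0 < k) (hkr : 1 / (k : ℝ) < r) :
    4 / (2 * k + 1) ≤ ∫ u in Set.Ioc (4 / (2 * k + 1) : ℝ) (2 / k), L u := by
  have hx : 1 / (k : ℝ) ∈ Set.Ioo (-r) r := ⟨by linarith [show 0 < 1 / (k : ℝ) by positivity], hkr⟩
  have hτ : 2 * (k : ℝ) / (2 * k + 1) ∈ Set.Icc (0 : ℝ) 1 :=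
    ⟨by positivity, (div_le_one (by positivity)).2 (by linarith)⟩
  have hsum : |1 / (k : ℝ)| + |1 / (k : ℝ)| = 2 / k := by
    rw [abs_of_pos (by positivity)]
    ring
  have hτy : 2 * (k : ℝ) / (2 * k + 1) * (1 / k) = 2 / (2 * k + 1) := by field_simp
  have hτsum : 2 * (k : ℝ) / (2 * k + 1) * (2 / k) = 4 / (2 * k + 1) := by field_simp; ring
  have := H _ hx _ hx _ hτ
  rwa [hτy, abs_oscSin_sub hk, hsum, hτsum, integral_of_le (four_div_le_two_div hk)] at this

lemma pairwise_disjoint_Ioc_four_div_two_div :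
    Pairwise (Disjoint on fun k : ℕ => Set.Ioc (4 / (2 * k + 1) : ℝ) (2 / k)) := by
  have key : ∀ c d : ℕ, c < d →
      Disjoint (Set.Ioc (4 / (2 * c + 1) : ℝ) (2 / c)) (Set.Ioc (4 / (2 * d + 1)) (2 / d)) := by
    intro c d hcd
    rcases Nat.eq_zero_or_pos c with rfl | hc
    · simp -- `2 / 0 = 0`, so the `k = 0` interval is empty
    refine (Set.Ioc_disjoint_Ioc_of_le ?_).symm
    have hcd' : (c : ℝ) + 1 ≤ d := by exact_mod_cast hcd
    rw [div_le_div_iff₀ (by linarith [(Nat.cast_pos.2 hc : (0 : ℝ) < c)]) (by positivity)]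
    linarith
  intro c d hne
  rcases hne.lt_or_gt with h | h
  exacts [key c d h, (key d c h).symm]

lemma not_summable_four_div : ¬ Summable fun k : ℕ => (4 : ℝ) / (2 * k + 1) := by
  refine fun h => Real.not_summable_one_div_natCast (h.of_nonneg_of_le (fun _ => by positivity)
    fun k => ?_)
  rcases Nat.eq_zero_or_pos k with rfl | hk
  · norm_num
  have hk' : (1 : ℝ) ≤ k := by exact_mod_cast hk
  rw [div_le_div_iff₀ (by positivity) (by positivity)]
  linarith

theorem stmt17 (g : ℝ → ℝ)
    (hg : ∀ x : ℝ, g x = if x = 0 then 1 else 1 + 2 * x * Real.sin (Real.pi / x)) :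
    ∀ r : ℝ, 0 < r → ∀ L : ℝ → ℝ,
      (∀ u ∈ Set.Ioc (0:ℝ) (2 * r), 0 < L u) →
      IntegrableOn L (Set.Ioc (0:ℝ) (2 * r)) →
      ¬ (∀ x ∈ Set.Ioo (-r) r, ∀ y ∈ Set.Ioo (-r) r, ∀ τ ∈ Set.Icc (0:ℝ) 1,
          |g x - g (τ * y)| ≤ ∫ u in (τ * (|x| + |y|))..(|x| + |y|), L u) := by
  obtain rfl : g = oscSin := funext hg
  intro r hr L _ hL H
  set S : ℕ → Set ℝ := fun k => Set.Ioc (4 / (2 * k + 1)) (2 / k) ∩ Set.Ioc 0 (2 * r)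
  have hS : Summable fun k => ∫ u in S k, L u :=
    (hasSum_integral_iUnion (fun _ => measurableSet_Ioc.inter measurableSet_Ioc)
      (pairwise_disjoint_Ioc_four_div_two_div.mono fun _ _ h =>
        h.mono Set.inter_subset_left Set.inter_subset_left)
      (hL.mono_set (Set.iUnion_subset fun _ => Set.inter_subset_right))).summable
  refine not_summable_four_div (hS.of_norm_bounded_eventually ?_)
  rw [Nat.cofinite_eq_atTop]
  filter_upwards [eventually_gt_atTop 0,
    tendsto_one_div_atTop_nhds_zero_nat.eventually (gt_mem_nhds hr)] with k hk hkr
  have hsub : Set.Ioc (4 / (2 * k + 1) : ℝ) (2 / k) ⊆ Set.Ioc 0 (2 * r) :=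
    Set.Ioc_subset_Ioc (by positivity) (by rw [← mul_one_div]; linarith)
  rw [Real.norm_of_nonneg (by positivity), show S k = _ from Set.inter_eq_left.2 hsub]
  exact four_div_le_setIntegral H hk hkr
end
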